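/- In Cherednik's double affine Hecke algebra HH_N(q,t), the elements D_i := T_{i−1}^{-1}⋯T_1^{-1} D_1 T_1^{-1}⋯T_{i−1}^{-1}, where D_1 = X_1^{-1}(Y_1 − 1), pairwise commute: [D_i, D_j] = 0 for all i,j. -/
import Mathlib


/- STATEMENT 8: In Cherednik's DAHA HH_N(q,t), the q-deformed Dunkl elements
D_i := T_{i−1}^{-1}⋯T_1^{-1} D_1 T_1^{-1}⋯T_{i−1}^{-1}, where
D_1 = X_1^{-1}(Y_1 − 1), pairwise commute. -/

/-- Cherednik's double affine Hecke algebra HH_N(q,t), t = 𝐭², presented by the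
relations (R1)–(R12); an algebra A together with elements satisfying the
relations (generators indexed 1,…,N resp. 1,…,N−1). -/
structure DAHA (N : ℕ) (q bt : ℂ) (A : Type*) [Ring A] [Algebra ℂ A] where
  T : ℕ → A
  Tinv : ℕ → A
  X : ℕ → A
  Xinv : ℕ → A
  Y : ℕ → A
  Yinv : ℕ → A
  hT : ∀ i, 1 ≤ i → i ≤ N - 1 → T i * Tinv i = 1 ∧ Tinv i * T i = 1
  hX : ∀ i, 1 ≤ i → i ≤ N → X i * Xinv i = 1 ∧ Xinv i * X i = 1
  hY : ∀ i, 1 ≤ i → i ≤ N → Y i * Yinv i = 1 ∧ Yinv i * Y i = 1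
  R1 : ∀ i, 1 ≤ i → i ≤ N - 1 →
    (T i - algebraMap ℂ A bt) * (T i + algebraMap ℂ A bt⁻¹) = 0
  R2 : ∀ i, 1 ≤ i → i + 1 ≤ N - 1 → T i * T (i + 1) * T i = T (i + 1) * T i * T (i + 1)
  R3 : ∀ i j, 1 ≤ i → i ≤ N - 1 → 1 ≤ j → j ≤ N - 1 → i + 2 ≤ j → T i * T j = T j * T i
  R4 : ∀ i, 1 ≤ i → i ≤ N - 1 → T i * X i * T i = X (i + 1)
  R5 : ∀ i j, 1 ≤ i → i ≤ N - 1 → 1 ≤ j → j ≤ N → j ≠ i → j ≠ i + 1 → T i * X j = X j * T i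
  R6 : ∀ i, 1 ≤ i → i ≤ N - 1 → T i * Y i * T i = Y (i + 1)
  R7 : ∀ i j, 1 ≤ i → i ≤ N - 1 → 1 ≤ j → j ≤ N → j ≠ i → j ≠ i + 1 → T i * Y j = Y j * T i
  R8 : 2 ≤ N → Xinv 1 * Yinv 2 * X 1 * Y 2 = T 1 * T 1
  R9 : ∀ i, 1 ≤ i → i ≤ N →
    Y i * (((List.range N).map (fun j => X (j + 1))).prod)
      = algebraMap ℂ A q * ((((List.range N).map (fun j => X (j + 1))).prod) * Y i)
  R10 : ∀ i, 1 ≤ i → i ≤ N →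
    X i * (((List.range N).map (fun j => Y (j + 1))).prod)
      = algebraMap ℂ A q⁻¹ * ((((List.range N).map (fun j => Y (j + 1))).prod) * X i)
  R11 : ∀ i j, 1 ≤ i → i ≤ N → 1 ≤ j → j ≤ N → X i * X j = X j * X i
  R12 : ∀ i j, 1 ≤ i → i ≤ N → 1 ≤ j → j ≤ N → Y i * Y j = Y j * Y i

/-- D_i = T_{i−1}^{-1}⋯T_1^{-1} · X_1^{-1}(Y_1 − 1) · T_1^{-1}⋯T_{i−1}^{-1} -/
noncomputable def DAHA.D {N : ℕ} {q bt : ℂ} {A : Type*} [Ring A] [Algebra ℂ A]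
    (H : DAHA N q bt A) (i : ℕ) : A :=
  (((List.range (i - 1)).reverse.map (fun j => H.Tinv (j + 1))).prod) *
    (H.Xinv 1 * (H.Y 1 - 1)) *
    (((List.range (i - 1)).map (fun j => H.Tinv (j + 1))).prod)

section Aux

variable {A : Type*} [Ring A] [Algebra ℂ A] {N : ℕ} {q bt : ℂ}

lemma D_one (H : DAHA N q bt A) : H.D 1 = H.Xinv 1 * (H.Y 1 - 1) := by
  simp [DAHA.D]

lemma D_succ (H : DAHA N q bt A) (i : ℕ) (hi : 1 ≤ i) :
    H.D (i + 1) = H.Tinv i * H.D i * H.Tinv i := by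
  have h1 : i + 1 - 1 = (i - 1) + 1 := by omega
  have h2 : i - 1 + 1 = i := by omega
  rw [DAHA.D, DAHA.D, h1, List.range_succ]
  simp only [List.reverse_append, List.map_append, List.prod_append, List.map_cons,
    List.map_nil, List.prod_cons, List.prod_nil, List.reverse_cons, List.reverse_nil,
    List.nil_append, List.cons_append, h2, mul_one, one_mul]
  noncomm_ring

lemma inv_comm' {a b c : A} (hab : a * b = 1) (hba : b * a = 1) (h : a * c = c * a) :
    b * c = c * b := by
  calc b * c = b * c * (a * b) := by rw [hab, mul_one]
    _ = b * ((c * a) * b) := by noncomm_ring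
    _ = b * ((a * c) * b) := by rw [h]
    _ = (b * a) * (c * b) := by noncomm_ring
    _ = 1 * (c * b) := by rw [hba]
    _ = c * b := by rw [one_mul]

lemma T_comm_D (H : DAHA N q bt A) :
    ∀ i, 1 ≤ i → ∀ k, i + 1 ≤ k → k ≤ N - 1 → H.T k * H.D i = H.D i * H.T k := by
  intro i hi
  induction i, hi using Nat.le_induction with
  | base =>
    intro k hk1 hk2
    have hx1 : H.T k * H.X 1 = H.X 1 * H.T k :=
      H.R5 k 1 (by omega) hk2 (by omega) (by omega) (by omega) (by omega)
    have hp1 : H.T k * H.Xinv 1 = H.Xinv 1 * H.T k :=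
      (inv_comm' (H.hX 1 (by omega) (by omega)).1 (H.hX 1 (by omega) (by omega)).2 hx1.symm).symm
    have hy1 : H.T k * H.Y 1 = H.Y 1 * H.T k :=
      H.R7 k 1 (by omega) hk2 (by omega) (by omega) (by omega) (by omega)
    rw [D_one]
    calc H.T k * (H.Xinv 1 * (H.Y 1 - 1))
        = (H.T k * H.Xinv 1) * (H.Y 1 - 1) := by noncomm_ring
      _ = (H.Xinv 1 * H.T k) * (H.Y 1 - 1) := by rw [hp1]
      _ = H.Xinv 1 * (H.T k * H.Y 1 - H.T k) := by noncomm_ring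
      _ = H.Xinv 1 * (H.Y 1 * H.T k - H.T k) := by rw [hy1]
      _ = (H.Xinv 1 * (H.Y 1 - 1)) * H.T k := by noncomm_ring
  | succ n hn ih =>
    intro k hk1 hk2
    have hb : H.T n * H.T k = H.T k * H.T n :=
      H.R3 n k hn (by omega) (by omega) hk2 (by omega)
    have hbi : H.T k * H.Tinv n = H.Tinv n * H.T k :=
      (inv_comm' (H.hT n hn (by omega)).1 (H.hT n hn (by omega)).2 hb).symm
    have ihk : H.T k * H.D n = H.D n * H.T k := ih k (by omega) hk2
    rw [D_succ H n hn]
    calc H.T k * (H.Tinv n * H.D n * H.Tinv n)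
        = (H.T k * H.Tinv n) * (H.D n * H.Tinv n) := by noncomm_ring
      _ = (H.Tinv n * H.T k) * (H.D n * H.Tinv n) := by rw [hbi]
      _ = H.Tinv n * ((H.T k * H.D n) * H.Tinv n) := by noncomm_ring
      _ = H.Tinv n * ((H.D n * H.T k) * H.Tinv n) := by rw [ihk]
      _ = (H.Tinv n * H.D n) * (H.T k * H.Tinv n) := by noncomm_ring
      _ = (H.Tinv n * H.D n) * (H.Tinv n * H.T k) := by rw [hbi]
      _ = (H.Tinv n * H.D n * H.Tinv n) * H.T k := by noncomm_ring

lemma Tinv_comm_D (H : DAHA N q bt A) (i : ℕ) (hi : 1 ≤ i) (k : ℕ)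
    (hk1 : i + 1 ≤ k) (hk2 : k ≤ N - 1) : H.Tinv k * H.D i = H.D i * H.Tinv k :=
  inv_comm' (H.hT k (by omega) hk2).1 (H.hT k (by omega) hk2).2 (T_comm_D H i hi k hk1 hk2)

lemma braid_inv (H : DAHA N q bt A) (i : ℕ) (hi : 1 ≤ i) (hiN : i + 1 ≤ N - 1) :
    H.Tinv i * H.Tinv (i+1) * H.Tinv i = H.Tinv (i+1) * H.Tinv i * H.Tinv (i+1) := by
  have hb := H.R2 i hi hiN
  obtain ⟨ht1, hs1⟩ := H.hT i hi (by omega)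
  obtain ⟨ht2, hs2⟩ := H.hT (i+1) (by omega) hiN
  set t := H.T i
  set t' := H.T (i+1)
  set s := H.Tinv i
  set s' := H.Tinv (i+1)
  have h1 : (s*s'*s) * (t*t'*t) = 1 := by
    calc (s*s'*s)*(t*t'*t) = s*(s'*((s*t)*(t'*t))) := by noncomm_ring
      _ = s*(s'*(1*(t'*t))) := by rw [hs1]
      _ = s*((s'*t')*t) := by noncomm_ring
      _ = s*(1*t) := by rw [hs2]
      _ = s*t := by noncomm_ring
      _ = 1 := hs1
  have h2 : (t*t'*t) * (s'*s*s') = 1 := by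
    calc (t*t'*t)*(s'*s*s') = (t'*t*t')*(s'*s*s') := by rw [hb]
      _ = t'*(t*((t'*s')*(s*s'))) := by noncomm_ring
      _ = t'*(t*(1*(s*s'))) := by rw [ht2]
      _ = t'*((t*s)*s') := by noncomm_ring
      _ = t'*(1*s') := by rw [ht1]
      _ = t'*s' := by noncomm_ring
      _ = 1 := ht2
  calc s*s'*s = (s*s'*s) * ((t*t'*t) * (s'*s*s')) := by rw [h2, mul_one]
    _ = ((s*s'*s) * (t*t'*t)) * (s'*s*s') := by noncomm_ring
    _ = 1 * (s'*s*s') := by rw [h1]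
    _ = s'*s*s' := by rw [one_mul]

lemma D12 (H : DAHA N q bt A) (hN : 2 ≤ N) : H.D 1 * H.D 2 = H.D 2 * H.D 1 := by
  have h1N : 1 ≤ N - 1 := by omega
  obtain ⟨hts, hst⟩ := H.hT 1 le_rfl h1N
  obtain ⟨hxp, hpx⟩ := H.hX 1 (by omega) (by omega)
  obtain ⟨hx2q, hqx2⟩ := H.hX 2 (by omega) hN
  obtain ⟨hy2a, _⟩ := H.hY 2 (by omega) hN
  have hy2rel := H.R6 1 le_rfl h1N
  have hx2rel := H.R4 1 le_rfl h1N
  norm_num at hy2rel hx2rel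
  have hyy : H.Y 1 * H.Y 2 = H.Y 2 * H.Y 1 := H.R12 1 2 (by omega) (by omega) (by omega) hN
  have hxx : H.X 1 * H.X 2 = H.X 2 * H.X 1 := H.R11 1 2 (by omega) (by omega) (by omega) hN
  have h8 := H.R8 hN
  have hr1 := H.R1 1 le_rfl h1N
  have hd2 := D_succ H 1 le_rfl
  norm_num at hd2
  rw [D_one] at hd2
  set t := H.T 1
  set s := H.Tinv 1
  set x := H.X 1
  set p := H.Xinv 1
  set x2 := H.X 2
  set Q := H.Xinv 2
  set y1 := H.Y 1
  set y2 := H.Y 2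
  set yi2 := H.Yinv 2
  -- p and Q commute
  have hQx : Q * x = x * Q := inv_comm' hx2q hqx2 hxx.symm
  have hPQ : p * Q = Q * p := inv_comm' hxp hpx hQx.symm
  -- y1 = s * (y2 * s)
  have hy1 : s * (y2 * s) = y1 := by
    calc s*(y2*s) = s*((t*y1*t)*s) := by rw [hy2rel]
      _ = (s*t)*(y1*(t*s)) := by noncomm_ring
      _ = 1*(y1*1) := by rw [hst, hts]
      _ = y1 := by noncomm_ring
  -- (M):  x*y2 = y2*(x*(t*t))
  have hM : x * y2 = y2 * (x * (t * t)) := by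
    calc x*y2 = 1*(x*y2) := by rw [one_mul]
      _ = (y2*yi2)*(x*y2) := by rw [hy2a]
      _ = y2*((1*yi2)*(x*y2)) := by noncomm_ring
      _ = y2*(((x*p)*yi2)*(x*y2)) := by rw [hxp]
      _ = y2*(x*(p*yi2*x*y2)) := by noncomm_ring
      _ = y2*(x*(t*t)) := by rw [h8]
  -- (N):  x2*y1 = (t*t)*(y1*x2)
  have e1 : x2 * y1 = t*(y2*(x*t)) := by
    calc x2*y1 = x2*(s*(y2*s)) := by rw [hy1]
      _ = (t*x*t)*(s*(y2*s)) := by rw [hx2rel]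
      _ = (t*x)*((t*s)*(y2*s)) := by noncomm_ring
      _ = (t*x)*(1*(y2*s)) := by rw [hts]
      _ = t*((x*y2)*s) := by noncomm_ring
      _ = t*((y2*(x*(t*t)))*s) := by rw [hM]
      _ = t*(y2*(x*(t*(t*s)))) := by noncomm_ring
      _ = t*(y2*(x*(t*1))) := by rw [hts]
      _ = t*(y2*(x*t)) := by rw [mul_one]
  have e2 : (t*t)*(y1*x2) = t*(y2*(x*t)) := by
    calc (t*t)*(y1*x2) = (t*t)*((s*(y2*s))*x2) := by rw [hy1]
      _ = (t*t)*((s*(y2*s))*(t*x*t)) := by rw [hx2rel]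
      _ = t*((t*s)*(y2*((s*t)*(x*t)))) := by noncomm_ring
      _ = t*(1*(y2*(1*(x*t)))) := by rw [hts, hst]
      _ = t*(y2*(x*t)) := by noncomm_ring
  have hNrel : x2 * y1 = (t*t)*(y1*x2) := e1.trans e2.symm
  -- (α):  y1*Q = Q*((t*t)*y1)
  have hα : y1 * Q = Q * ((t*t)*y1) := by
    calc y1*Q = 1*(y1*Q) := by rw [one_mul]
      _ = (Q*x2)*(y1*Q) := by rw [hqx2]
      _ = Q*((x2*y1)*Q) := by noncomm_ring
      _ = Q*(((t*t)*(y1*x2))*Q) := by rw [hNrel]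
      _ = Q*((t*t)*(y1*(x2*Q))) := by noncomm_ring
      _ = Q*((t*t)*(y1*1)) := by rw [hx2q]
      _ = Q*((t*t)*y1) := by rw [mul_one]
  -- (C):  y2*(s*s) = p*(y2*x)
  have hC : y2*(s*s) = p*(y2*x) := by
    calc y2*(s*s) = 1*(y2*(s*s)) := by rw [one_mul]
      _ = (p*x)*(y2*(s*s)) := by rw [hpx]
      _ = p*((x*y2)*(s*s)) := by noncomm_ring
      _ = p*((y2*(x*(t*t)))*(s*s)) := by rw [hM]
      _ = p*(y2*(x*(t*((t*s)*s)))) := by noncomm_ring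
      _ = p*(y2*(x*(t*(1*s)))) := by rw [hts]
      _ = p*(y2*(x*(t*s))) := by noncomm_ring
      _ = p*(y2*(x*1)) := by rw [hts]
      _ = p*(y2*x) := by rw [mul_one]
  -- (β):  (y2*(s*s))*p = p*y2
  have hβ : (y2*(s*s))*p = p*y2 := by
    calc (y2*(s*s))*p = (p*(y2*x))*p := by rw [hC]
      _ = p*(y2*(x*p)) := by noncomm_ring
      _ = p*(y2*1) := by rw [hxp]
      _ = p*y2 := by rw [mul_one]
  -- (γ):  (t*t) commutes with y1*y2
  have ht1 : t*(y1*y2) = (y1*y2)*t := by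
    calc t*(y1*y2) = t*(y1*(t*y1*t)) := by rw [hy2rel]
      _ = (t*y1*t)*(y1*t) := by noncomm_ring
      _ = y2*(y1*t) := by rw [hy2rel]
      _ = (y2*y1)*t := by noncomm_ring
      _ = (y1*y2)*t := by rw [hyy]
  have hγ : (t*t)*(y1*y2) = (y1*y2)*(t*t) := by
    calc (t*t)*(y1*y2) = t*(t*(y1*y2)) := by noncomm_ring
      _ = t*((y1*y2)*t) := by rw [ht1]
      _ = (t*(y1*y2))*t := by noncomm_ring
      _ = ((y1*y2)*t)*t := by rw [ht1]
      _ = (y1*y2)*(t*t) := by noncomm_ring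
  -- the element D 2
  have hQ2 : s*(p*s) = Q := by
    have hx2Q : x2*(s*(p*s)) = 1 := by
      calc x2*(s*(p*s)) = (t*x*t)*(s*(p*s)) := by rw [hx2rel]
        _ = (t*x)*((t*s)*(p*s)) := by noncomm_ring
        _ = (t*x)*(1*(p*s)) := by rw [hts]
        _ = t*((x*p)*s) := by noncomm_ring
        _ = t*(1*s) := by rw [hxp]
        _ = t*s := by noncomm_ring
        _ = 1 := hts
    calc s*(p*s) = 1*(s*(p*s)) := by rw [one_mul]
      _ = (Q*x2)*(s*(p*s)) := by rw [hqx2]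
      _ = Q*(x2*(s*(p*s))) := by noncomm_ring
      _ = Q*1 := by rw [hx2Q]
      _ = Q := by rw [mul_one]
  have hD2 : H.D 2 = Q*(y2*(s*s)) - Q := by
    calc H.D 2 = s * (p*(y1-1)) * s := hd2
      _ = s * (p*(s*(y2*s) - 1)) * s := by rw [hy1]
      _ = (s*(p*s))*(y2*(s*s)) - (s*(p*s)) := by noncomm_ring
      _ = Q*(y2*(s*s)) - Q := by rw [hQ2]
  have hD1 : H.D 1 = p*y1 - p := by rw [D_one]; noncomm_ring
  -- case split on bt = 0
  by_cases hbt : bt = 0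
  · subst hbt
    simp only [inv_zero, map_zero, sub_zero, add_zero] at hr1
    have hone : (1:A) = 0 := by
      calc (1:A) = s*((s*t)*t) := by rw [hst, one_mul, hst]
        _ = (s*s)*(t*t) := by noncomm_ring
        _ = (s*s)*0 := by rw [hr1]
        _ = 0 := by rw [mul_zero]
    have hall : ∀ z : A, z = 0 := fun z => by
      calc z = z*1 := (mul_one z).symm
        _ = z*0 := by rw [hone]
        _ = 0 := mul_zero z
    exact (hall _).trans (hall _).symm
  · -- quadratic relation
    set β := algebraMap ℂ A bt with hβdef
    set β' := algebraMap ℂ A bt⁻¹ with hβ'def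
    set c := algebraMap ℂ A (bt - bt⁻¹) with hcdef
    have hbb : β * β' = 1 := by
      rw [hβdef, hβ'def, ← map_mul, mul_inv_cancel₀ hbt, map_one]
    have hco : t*β' = β'*t := (Algebra.commutes bt⁻¹ t).symm
    have hcc : c = β - β' := by rw [hcdef, hβdef, hβ'def, map_sub]
    have hc : ∀ z : A, c * z = z * c := fun z => Algebra.commutes (bt - bt⁻¹) z
    have hquad : t*t = c*t + 1 := by
      calc t*t = (t - β)*(t + β') - (t*β') + β*t + β*β' := by noncomm_ring
        _ = 0 - (t*β') + β*t + β*β' := by rw [hr1]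
        _ = 0 - (β'*t) + β*t + 1 := by rw [hco, hbb]
        _ = (β - β')*t + 1 := by noncomm_ring
        _ = c*t + 1 := by rw [hcc]
    have hss : s*s = 1 - c*s := by
      have q1 : s*((t*t)*s) = 1 := by
        calc s*((t*t)*s) = (s*t)*(t*s) := by noncomm_ring
          _ = 1 := by rw [hst, hts, one_mul]
      have q2 : s*((c*t+1)*s) = c*s + s*s := by
        calc s*((c*t+1)*s) = (s*c)*(t*s) + s*s := by noncomm_ring
          _ = (c*s)*(t*s) + s*s := by rw [(hc s).symm]
          _ = c*((s*t)*s) + s*s := by noncomm_ring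
          _ = c*(1*s) + s*s := by rw [hst]
          _ = c*s + s*s := by rw [one_mul]
      have q3 : (1:A) = c*s + s*s := by
        calc (1:A) = s*((t*t)*s) := q1.symm
          _ = s*((c*t+1)*s) := by rw [hquad]
          _ = c*s + s*s := q2
      calc s*s = (c*s + s*s) - c*s := by noncomm_ring
        _ = 1 - c*s := by rw [← q3]
    -- (δ)
    have hty : t*y1 = y2*s := by
      calc t*y1 = (t*y1)*(t*s) := by rw [hts, mul_one]
        _ = (t*y1*t)*s := by noncomm_ring
        _ = y2*s := by rw [hy2rel]
    have hδ : (t*t)*y1 + y2*(s*s) = y1 + y2 := by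
      calc (t*t)*y1 + y2*(s*s)
          = (c*t+1)*y1 + y2*(1 - c*s) := by rw [hquad, hss]
        _ = c*(t*y1) + y1 + (y2 - (y2*c)*s) := by noncomm_ring
        _ = c*(t*y1) + y1 + (y2 - (c*y2)*s) := by rw [hc y2]
        _ = c*(t*y1) + y1 + (y2 - c*(y2*s)) := by noncomm_ring
        _ = c*(y2*s) + y1 + (y2 - c*(y2*s)) := by rw [hty]
        _ = y1 + y2 := by noncomm_ring
    -- product of (t*t)*y1 with y2*(s*s)
    have eγ : ((t*t)*y1)*(y2*(s*s)) = y2*y1 := by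
      calc ((t*t)*y1)*(y2*(s*s)) = ((t*t)*(y1*y2))*(s*s) := by noncomm_ring
        _ = ((y1*y2)*(t*t))*(s*s) := by rw [hγ]
        _ = (y1*y2)*((t*(t*s))*s) := by noncomm_ring
        _ = (y1*y2)*((t*1)*s) := by rw [hts]
        _ = (y1*y2)*(t*s) := by noncomm_ring
        _ = (y1*y2)*1 := by rw [hts]
        _ = y2*y1 := by rw [mul_one, hyy]
    -- final assembly
    rw [hD1, hD2]
    calc (p*y1 - p) * (Q*(y2*(s*s)) - Q)
        = (p*(y1*Q))*(y2*(s*s)) - p*(y1*Q) - (p*Q)*(y2*(s*s)) + p*Q := by noncomm_ring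
      _ = (p*(Q*((t*t)*y1)))*(y2*(s*s)) - p*(Q*((t*t)*y1)) - (p*Q)*(y2*(s*s)) + p*Q := by
            rw [hα]
      _ = (p*Q)*((((t*t)*y1)*(y2*(s*s)) - ((t*t)*y1 + y2*(s*s))) + 1) := by noncomm_ring
      _ = (p*Q)*((y2*y1 - (y1 + y2)) + 1) := by rw [eγ, hδ]
      _ = (Q*p)*((y2*y1 - (y1 + y2)) + 1) := by rw [hPQ]
      _ = (Q*(p*y2))*y1 - Q*(p*y2) - (Q*p)*y1 + Q*p := by noncomm_ring
      _ = (Q*((y2*(s*s))*p))*y1 - Q*((y2*(s*s))*p) - (Q*p)*y1 + Q*p := by rw [hβ]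
      _ = (Q*(y2*(s*s)) - Q)*(p*y1 - p) := by noncomm_ring

lemma Dconsec (H : DAHA N q bt A) :
    ∀ i, 1 ≤ i → i + 1 ≤ N → H.D i * H.D (i+1) = H.D (i+1) * H.D i := by
  intro i hi
  induction i, hi using Nat.le_induction with
  | base => intro h2; exact D12 H h2
  | succ n hn ih =>
    intro hN2
    have hbr : H.Tinv n * H.Tinv (n+1) * H.Tinv n
        = H.Tinv (n+1) * H.Tinv n * H.Tinv (n+1) := braid_inv H n hn (by omega)
    have hva : H.Tinv (n+1) * H.D n = H.D n * H.Tinv (n+1) :=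
      Tinv_comm_D H n hn (n+1) le_rfl (by omega)
    have ihr : H.D n * (H.Tinv n * H.D n * H.Tinv n)
        = (H.Tinv n * H.D n * H.Tinv n) * H.D n := by
      rw [← D_succ H n hn]; exact ih (by omega)
    set a := H.D n
    set u := H.Tinv n
    set v := H.Tinv (n+1)
    have ih2 : a*(u*(a*u)) = u*(a*(u*a)) := by
      calc a*(u*(a*u)) = a*(u*a*u) := by noncomm_ring
        _ = (u*a*u)*a := ihr
        _ = u*(a*(u*a)) := by noncomm_ring
    have eL : (u*a*u) * (v*(u*a*u)*v) = (u*v)*((a*(u*(a*u)))*(v*u)) := by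
      calc (u*a*u) * (v*(u*a*u)*v)
          = (u*a) * ((u*v*u) * (a*(u*v))) := by noncomm_ring
        _ = (u*a) * ((v*u*v) * (a*(u*v))) := by rw [hbr]
        _ = u*((a*v)*(u*(v*(a*(u*v))))) := by noncomm_ring
        _ = u*((v*a)*(u*(v*(a*(u*v))))) := by rw [hva]
        _ = (u*v)*(a*(u*((v*a)*(u*v)))) := by noncomm_ring
        _ = (u*v)*(a*(u*((a*v)*(u*v)))) := by rw [hva]
        _ = (u*v)*((a*(u*a))*(v*u*v)) := by noncomm_ring
        _ = (u*v)*((a*(u*a))*(u*v*u)) := by rw [hbr]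
        _ = (u*v)*((a*(u*(a*u)))*(v*u)) := by noncomm_ring
    have eR : (v*(u*a*u)*v) * (u*a*u) = (u*v)*((u*(a*(u*a)))*(v*u)) := by
      calc (v*(u*a*u)*v) * (u*a*u)
          = (v*(u*a)) * ((u*v*u)*(a*u)) := by noncomm_ring
        _ = (v*(u*a)) * ((v*u*v)*(a*u)) := by rw [hbr]
        _ = (v*u)*((a*v)*(u*(v*(a*u)))) := by noncomm_ring
        _ = (v*u)*((v*a)*(u*(v*(a*u)))) := by rw [hva]
        _ = ((v*u)*v)*(a*(u*((v*a)*u))) := by noncomm_ring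
        _ = ((v*u)*v)*(a*(u*((a*v)*u))) := by rw [hva]
        _ = (v*u*v)*(a*(u*(a*(v*u)))) := by noncomm_ring
        _ = (u*v*u)*(a*(u*(a*(v*u)))) := by rw [hbr]
        _ = (u*v)*((u*(a*(u*a)))*(v*u)) := by noncomm_ring
    rw [D_succ H (n+1) (by omega), D_succ H n hn]
    calc (u*a*u) * (v*(u*a*u)*v) = (u*v)*((a*(u*(a*u)))*(v*u)) := eL
      _ = (u*v)*((u*(a*(u*a)))*(v*u)) := by rw [ih2]
      _ = (v*(u*a*u)*v) * (u*a*u) := eR.symm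

lemma D_comm_lt (H : DAHA N q bt A) :
    ∀ i, 1 ≤ i → ∀ j, i + 1 ≤ j → j ≤ N → H.D i * H.D j = H.D j * H.D i := by
  intro i hi j hij
  induction j, hij using Nat.le_induction with
  | base => intro hN'; exact Dconsec H i hi hN'
  | succ n hn ih =>
    intro hn1
    have hd := D_succ H n (by omega)
    have hv : H.Tinv n * H.D i = H.D i * H.Tinv n :=
      Tinv_comm_D H i hi n hn (by omega)
    have ihn : H.D i * H.D n = H.D n * H.D i := ih (by omega)
    rw [hd]
    calc H.D i * (H.Tinv n * H.D n * H.Tinv n)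
        = (H.D i * H.Tinv n) * (H.D n * H.Tinv n) := by noncomm_ring
      _ = (H.Tinv n * H.D i) * (H.D n * H.Tinv n) := by rw [hv]
      _ = H.Tinv n * ((H.D i * H.D n) * H.Tinv n) := by noncomm_ring
      _ = H.Tinv n * ((H.D n * H.D i) * H.Tinv n) := by rw [ihn]
      _ = (H.Tinv n * H.D n) * (H.D i * H.Tinv n) := by noncomm_ring
      _ = (H.Tinv n * H.D n) * (H.Tinv n * H.D i) := by rw [hv]
      _ = (H.Tinv n * H.D n * H.Tinv n) * H.D i := by noncomm_ring


end Aux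

theorem statement8 {A : Type*} [Ring A] [Algebra ℂ A] (N : ℕ) (q bt : ℂ)
    (H : DAHA N q bt A) :
    ∀ i j, 1 ≤ i → i ≤ N → 1 ≤ j → j ≤ N → H.D i * H.D j = H.D j * H.D i := by
  intro i j hi hiN hj hjN
  rcases Nat.lt_trichotomy i j with h | h | h
  · exact D_comm_lt H i hi j h hjN
  · subst h; rfl
  · exact (D_comm_lt H j hj i h hiN).symm
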